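/- arXiv:0909.3567 — 9 statements merged into one kernel-verified Lean document; each statement's English description precedes it below -/
import Mathlib

section
/- Let x, y be positive integers with x ≤ y and xy - x - y ≠ 0. Then (x+y)/(xy-x-y) is an integer if and only if (x,y) is one of: (1,λ) for some positive integer λ, (2,3), (2,4), (2,6), (3,3), (3,6), or (4,4). -/
/-!
Write `d = xy - x - y`. For `x = 1` we have `d = -1`, which divides everything. For `x ≥ 2`,
`d ∣ x + y` with `x + y > 0` forces `d ≤ x + y`, i.e. `(x - 2)(y - 2) ≤ 4`; together with
`x ≤ y` this leaves `x ≤ 4` and, unless `x = 2`, `y ≤ 6`. For `x = 2` the condition reads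
`y - 2 ∣ y + 2`, i.e. `y - 2 ∣ 4`, so again `y ≤ 6`, and the finitely many remaining pairs are
checked directly.
-/

namespace Int

theorem sub_two_mul_sub_two_le_four_of_dvd {x y : ℤ} (hpos : 0 < x + y)
    (h : x * y - x - y ∣ x + y) : (x - 2) * (y - 2) ≤ 4 := by
  have := Int.le_of_dvd hpos h
  linarith

theorem le_six_of_two_mul_sub_sub_dvd {y : ℤ} (h : 2 * y - 2 - y ∣ 2 + y) :
    y ≤ 6 := by
  have hdvd : y - 2 ∣ 4 := by
    rw [show 2 * y - 2 - y = y - 2 by ring] at h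
    simpa [show 2 + y - (y - 2) = 4 by ring] using dvd_sub h (dvd_refl (y - 2))
  have := Int.le_of_dvd (by norm_num) hdvd
  omega

theorem le_four_and_le_six_of_dvd {x y : ℤ} (hx : 2 ≤ x) (hxy : x ≤ y)
    (h : x * y - x - y ∣ x + y) : x ≤ 4 ∧ y ≤ 6 := by
  have hprod := sub_two_mul_sub_two_le_four_of_dvd (by omega) h
  have hx4 : x ≤ 4 := by nlinarith
  refine ⟨hx4, ?_⟩
  rcases eq_or_lt_of_le hx with rfl | hx3
  · exact le_six_of_two_mul_sub_sub_dvd h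
  · nlinarith

end Int

theorem stmt_0_general (x y : ℤ) (hx : 0 < x) (hxy : x ≤ y) :
    (x * y - x - y) ∣ (x + y) ↔
      x = 1 ∨ (x, y) = (2, 3) ∨ (x, y) = (2, 4) ∨ (x, y) = (2, 6) ∨
      (x, y) = (3, 3) ∨ (x, y) = (3, 6) ∨ (x, y) = (4, 4) := by
  simp only [Prod.mk.injEq]
  constructor
  · intro h
    rcases eq_or_lt_of_le (show 1 ≤ x by omega) with hx1 | hx2
    · exact Or.inl hx1.symm
    obtain ⟨hx4, hy6⟩ := Int.le_four_and_le_six_of_dvd hx2 hxy h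
    interval_cases x <;> interval_cases y <;> revert h <;> decide
  · rintro (rfl | ⟨rfl, rfl⟩ | ⟨rfl, rfl⟩ | ⟨rfl, rfl⟩ | ⟨rfl, rfl⟩ | ⟨rfl, rfl⟩ | ⟨rfl, rfl⟩)
    · rw [show 1 * y - 1 - y = -1 by ring]
      exact neg_dvd.2 (one_dvd _)
    all_goals norm_num

theorem stmt_0 (x y : ℤ) (hx : 0 < x) (hy : 0 < y) (hxy : x ≤ y)
    (hne : x * y - x - y ≠ 0) :
    (x * y - x - y) ∣ (x + y) ↔
      x = 1 ∨ (x, y) = (2, 3) ∨ (x, y) = (2, 4) ∨ (x, y) = (2, 6) ∨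
      (x, y) = (3, 3) ∨ (x, y) = (3, 6) ∨ (x, y) = (4, 4) :=
  stmt_0_general x y hx hxy
end

section
/- Let x, y be positive integers with x ≤ y and xy - x - y ≠ 0. If (xy-x-y) divides (x+y), then x ≤ 4. -/
theorem stmt_1_general (x y : ℤ) (hxy : x ≤ y) (hdvd : (x * y - x - y) ∣ (x + y)) :
    x ≤ 4 := by
  by_contra! hx
  have hsum : 0 < x + y := by omega
  have hprod : 3 * 3 ≤ (x - 2) * (y - 2) :=
    mul_le_mul (by omega) (by omega) (by norm_num) (by omega)
  have hlt : x + y < x * y - x - y := by linarith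
  exact (Int.le_of_dvd hsum hdvd).not_gt hlt

theorem stmt_1 (x y : ℤ) (hx : 0 < x) (hy : 0 < y) (hxy : x ≤ y)
    (hne : x * y - x - y ≠ 0) (hdvd : (x * y - x - y) ∣ (x + y)) :
    x ≤ 4 :=
  stmt_1_general x y hxy hdvd
end

section
/- Let x, y be positive integers with xy + y - x ≠ 0. Then (x-y)/(xy+y-x) is an integer if and only if y = 1 or y = x. -/
/-!
For `y ≥ 2` the divisor `x * y + y - x` exceeds `|x - y|`, so it can divide `x - y` only when
`x = y`; for `y = 1` the divisor is `1`.
-/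

lemma abs_sub_lt_mul_add_sub {x y : ℤ} (hx : 0 < x) (hy : 2 ≤ y) :
    |x - y| < x * y + y - x := by
  rw [abs_lt]
  constructor <;> nlinarith

theorem stmt_2_general (x y : ℤ) (hx : 0 < x) (hy : 0 < y) :
    (x * y + y - x) ∣ (x - y) ↔ y = 1 ∨ y = x := by
  constructor
  · intro hdvd
    rcases eq_or_ne y 1 with hy1 | hy1
    · exact Or.inl hy1
    · have hlt := abs_sub_lt_mul_add_sub hx (by omega : 2 ≤ y)
      have hxy : x - y = 0 := Int.eq_zero_of_abs_lt_dvd hdvd hlt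
      exact Or.inr (by omega)
  · rintro (rfl | rfl) <;> simp

theorem stmt_2 (x y : ℤ) (hx : 0 < x) (hy : 0 < y)
    (hne : x * y + y - x ≠ 0) :
    (x * y + y - x) ∣ (x - y) ↔ y = 1 ∨ y = x :=
  stmt_2_general x y hx hy
end

section
/- The periodic 3-dimensional Kac-van Moerbeke system admits a Lax pair: with L the 3×3 matrix with rows (0, x1, 1), (1, 0, x2), (x3, 1, 0) and B the matrix with rows (0, 0, x1·x2), (x2·x3, 0, 0), (0, x1·x3, 0), the equations x1' = x1(x3-x2), x2' = x2(x1-x3), x3' = x3(x2-x1) imply L' = L·B - B·L (entrywise). -/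
namespace KacVanMoerbeke

variable {R : Type*} [CommRing R]

def laxL (a b c : R) : Matrix (Fin 3) (Fin 3) R :=
  !![0, a, 1; 1, 0, b; c, 1, 0]

def laxB (a b c : R) : Matrix (Fin 3) (Fin 3) R :=
  !![0, 0, a * b; b * c, 0, 0; 0, a * c, 0]

/-- `velocity ȧ ḃ ċ` is the entrywise derivative of `laxL a b c`. -/
def velocity (a b c : R) : Matrix (Fin 3) (Fin 3) R :=
  !![0, a, 0; 0, 0, b; c, 0, 0]

theorem laxL_mul_laxB_sub (a b c : R) :
    laxL a b c * laxB a b c - laxB a b c * laxL a b c =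
      velocity (a * (c - b)) (b * (a - c)) (c * (b - a)) := by
  ext i j
  fin_cases i <;> fin_cases j <;>
    simp [laxL, laxB, velocity] <;> ring

theorem hasDerivAt_laxL_apply {x1 x2 x3 : ℝ → ℝ} {d1 d2 d3 t : ℝ}
    (h1 : HasDerivAt x1 d1 t) (h2 : HasDerivAt x2 d2 t) (h3 : HasDerivAt x3 d3 t)
    (i j : Fin 3) :
    HasDerivAt (fun s => laxL (x1 s) (x2 s) (x3 s) i j) (velocity d1 d2 d3 i j) t := by
  fin_cases i <;> fin_cases j <;> simp [laxL, velocity] <;>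
    first | assumption | exact hasDerivAt_const _ _

end KacVanMoerbeke

open KacVanMoerbeke in
theorem stmt_9 (x1 x2 x3 : ℝ → ℝ)
    (h1 : ∀ t, HasDerivAt x1 (x1 t * (x3 t - x2 t)) t)
    (h2 : ∀ t, HasDerivAt x2 (x2 t * (x1 t - x3 t)) t)
    (h3 : ∀ t, HasDerivAt x3 (x3 t * (x2 t - x1 t)) t) :
    let L : ℝ → Matrix (Fin 3) (Fin 3) ℝ :=
      fun t => !![0, x1 t, 1; 1, 0, x2 t; x3 t, 1, 0]
    let B : ℝ → Matrix (Fin 3) (Fin 3) ℝ :=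
      fun t => !![0, 0, x1 t * x2 t; x2 t * x3 t, 0, 0; 0, x1 t * x3 t, 0]
    ∀ (i j : Fin 3) (t : ℝ),
      HasDerivAt (fun t => L t i j) ((L t * B t - B t * L t) i j) t := by
  intro L B i j t
  have hcomm : L t * B t - B t * L t =
      velocity (x1 t * (x3 t - x2 t)) (x2 t * (x1 t - x3 t)) (x3 t * (x2 t - x1 t)) :=
    laxL_mul_laxB_sub (x1 t) (x2 t) (x3 t)
  rw [hcomm]
  exact hasDerivAt_laxL_apply (h1 t) (h2 t) (h3 t) i j
end

section
/- Consider the 3×3 Lotka-Volterra system with parameters (a,b,c) and Kowalevski matrix K(m) = (∂f_i/∂x_j + δ_{ij}) evaluated at the indicial locus point m = (1/a, -1/a, 0) (assuming a ≠ 0). Then the eigenvalues of K(m) are -1, 1, and (a-b+c)/a. -/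
/-! At `m` the third row of `K(m)` vanishes off the diagonal, so `K(m)` is block upper
triangular: a `2 × 2` block `!![0, 1; 1, 0]` with eigenvalues `±1`, and the corner entry
`1 - b/a + c/a = (a - b + c)/a`. -/

open Polynomial

theorem Matrix.charpoly_fin_three_of_lower_zero {R : Type*} [CommRing R]
    (p q r s t u w : R) :
    (!![p, q, r; s, t, u; 0, 0, w]).charpoly =
      (X ^ 2 - C (p + t) * X + C (p * t - q * s)) * (X - C w) := by
  rw [Matrix.charpoly, Matrix.det_fin_three]
  simp
  ring

theorem stmt_11 (a b c : ℝ) (ha : a ≠ 0) :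
    let m1 : ℝ := 1 / a
    let m2 : ℝ := -1 / a
    let m3 : ℝ := 0
    let K : Matrix (Fin 3) (Fin 3) ℝ :=
      !![a * m2 + b * m3 + 1, a * m1, b * m1;
         -a * m2, -a * m1 + c * m3 + 1, c * m2;
         -b * m3, -c * m3, -b * m1 - c * m2 + 1]
    K.charpoly = (X - C (-1)) * (X - C 1) * (X - C ((a - b + c) / a)) := by
  intro m1 m2 m3 K
  have hK : K = !![0, 1, b / a; 1, 0, -(c / a); 0, 0, (a - b + c) / a] := by
    simp only [K, m1, m2, m3]
    ext i j
    fin_cases i <;> fin_cases j <;> simp <;> field_simp <;> ring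
  rw [hK, Matrix.charpoly_fin_three_of_lower_zero]
  simp only [add_zero, mul_zero, mul_one, zero_sub, map_zero, map_neg, map_one]
  ring
end

section
/- The indicial locus of the 3×3 Lotka-Volterra system, i.e., the set of solutions (x,y,z) ∈ ℝ^3 of x + a·x·y + b·x·z = 0, y - a·x·y + c·y·z = 0, z - b·x·z - c·y·z = 0, with a, b, c all nonzero and a - b + c ≠ 0, consists exactly of the four points (0,0,0), (0, 1/c, -1/c), (1/b, 0, -1/b), and (1/a, -1/a, 0). -/
/-!
Each equation factors as a coordinate times an affine form: `x * (1 + a y + b z) = 0`,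
`y * (1 - a x + c z) = 0`, `z * (1 - b x - c y) = 0`. Choosing a vanishing factor in each
gives eight cases. Three of them force `1 = 0`, and four give the listed points. In the last
case all three affine forms vanish; their coefficient matrix is skew-symmetric with kernel
`(c, -b, a)`, and pairing the system with this vector yields `a - b + c = 0`.
-/

variable {K : Type*} [Field K] {a b c x y z : K}

def indicialLocus (a b c : K) : Set (K × K × K) :=
  {p | p.1 + a * p.1 * p.2.1 + b * p.1 * p.2.2 = 0 ∧
      p.2.1 - a * p.1 * p.2.1 + c * p.2.1 * p.2.2 = 0 ∧
      p.2.2 - b * p.1 * p.2.2 - c * p.2.1 * p.2.2 = 0}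

theorem mem_indicialLocus_iff :
    (x, y, z) ∈ indicialLocus a b c ↔
      (x = 0 ∨ 1 + a * y + b * z = 0) ∧ (y = 0 ∨ 1 - a * x + c * z = 0) ∧
        (z = 0 ∨ 1 - b * x - c * y = 0) := by
  have hx : x + a * x * y + b * x * z = x * (1 + a * y + b * z) := by ring
  have hy : y - a * x * y + c * y * z = y * (1 - a * x + c * z) := by ring
  have hz : z - b * x * z - c * y * z = z * (1 - b * x - c * y) := by ring
  simp only [indicialLocus, Set.mem_ofPred_eq, hx, hy, hz, mul_eq_zero]

theorem sub_add_eq_zero_of_indicial_factors (hx : 1 + a * y + b * z = 0)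
    (hy : 1 - a * x + c * z = 0) (hz : 1 - b * x - c * y = 0) : a - b + c = 0 := by
  linear_combination c * hx - b * hy + a * hz

theorem eq_one_div_of_one_sub_mul_eq_zero (h : 1 - c * y = 0) : y = 1 / c :=
  eq_one_div_of_mul_eq_one_right (by linear_combination -h)

theorem eq_neg_one_div_of_one_add_mul_eq_zero (h : 1 + c * z = 0) : z = -1 / c := by
  rw [neg_div, ← eq_one_div_of_one_sub_mul_eq_zero (y := -z) (by linear_combination h), neg_neg]

theorem mul_inv_mul_inv_self (c : K) : c * c⁻¹ * c⁻¹ = c⁻¹ := by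
  simpa only [inv_inv, mul_comm c⁻¹ c] using mul_inv_mul_cancel c⁻¹

theorem eq_of_mem_indicialLocus (habc : a - b + c ≠ 0) (h : (x, y, z) ∈ indicialLocus a b c) :
    (x, y, z) = (0, 0, 0) ∨ (x, y, z) = (0, 1 / c, -1 / c) ∨ (x, y, z) = (1 / b, 0, -1 / b) ∨
      (x, y, z) = (1 / a, -1 / a, 0) := by
  obtain ⟨rfl | hx, rfl | hy, rfl | hz⟩ := mem_indicialLocus_iff.1 h
  · left; rfl
  · norm_num at hz
  · norm_num at hy
  · simp only [mul_zero, sub_zero] at hy hz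
    rw [eq_one_div_of_one_sub_mul_eq_zero hz, eq_neg_one_div_of_one_add_mul_eq_zero hy]
    right; left; rfl
  · norm_num at hx
  · simp only [mul_zero, add_zero, sub_zero] at hx hz
    rw [eq_one_div_of_one_sub_mul_eq_zero hz, eq_neg_one_div_of_one_add_mul_eq_zero hx]
    right; right; left; rfl
  · simp only [mul_zero, add_zero] at hx hy
    rw [eq_one_div_of_one_sub_mul_eq_zero hy, eq_neg_one_div_of_one_add_mul_eq_zero hx]
    right; right; right; rfl
  · exact absurd (sub_add_eq_zero_of_indicial_factors hx hy hz) habc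

theorem indicialLocus_eq (habc : a - b + c ≠ 0) :
    indicialLocus a b c =
      {(0, 0, 0), (0, 1 / c, -1 / c), (1 / b, 0, -1 / b), (1 / a, -1 / a, 0)} := by
  ext ⟨x, y, z⟩
  simp only [Set.mem_insert_iff, Set.mem_singleton_iff]
  refine ⟨eq_of_mem_indicialLocus habc, ?_⟩
  rintro (h | h | h | h) <;> rw [h] <;>
    simp [indicialLocus, neg_div, mul_inv_mul_inv_self]

theorem stmt_13_general (a b c : ℝ)
    (habc : a - b + c ≠ 0) :
    {p : ℝ × ℝ × ℝ |
      p.1 + a * p.1 * p.2.1 + b * p.1 * p.2.2 = 0 ∧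
      p.2.1 - a * p.1 * p.2.1 + c * p.2.1 * p.2.2 = 0 ∧
      p.2.2 - b * p.1 * p.2.2 - c * p.2.1 * p.2.2 = 0} =
    {(0, 0, 0), (0, 1 / c, -1 / c), (1 / b, 0, -1 / b), (1 / a, -1 / a, 0)} :=
  indicialLocus_eq habc

theorem stmt_13 (a b c : ℝ) (ha : a ≠ 0) (hb : b ≠ 0) (hc : c ≠ 0)
    (habc : a - b + c ≠ 0) :
    {p : ℝ × ℝ × ℝ |
      p.1 + a * p.1 * p.2.1 + b * p.1 * p.2.2 = 0 ∧
      p.2.1 - a * p.1 * p.2.1 + c * p.2.1 * p.2.2 = 0 ∧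
      p.2.2 - b * p.1 * p.2.2 - c * p.2.1 * p.2.2 = 0} =
    {(0, 0, 0), (0, 1 / c, -1 / c), (1 / b, 0, -1 / b), (1 / a, -1 / a, 0)} :=
  stmt_13_general a b c habc
end

section
/- If k1 and k2 are integers with 1 ≤ k1 ≤ k2 and k1·k2 - k1 - k2 ≠ 0, and (k1·k2)/(k1·k2 - k1 - k2) is an integer, then either k1 = 1, or (k1,k2) ∈ {(2,3),(2,4),(2,6),(3,3),(3,6),(4,4)}. -/
/-!
Write `d = k₁k₂ - k₁ - k₂`. Since `d ∣ k₁k₂`, also `d ∣ k₁k₂ - d = k₁ + k₂` and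
`d ∣ k₁(k₁ + k₂) - k₁k₂ = k₁²`. For `2 ≤ k₁ ≤ k₂` the divisor `d` is positive, so
`d ≤ k₁ + k₂`, i.e. `(k₁ - 2)(k₂ - 2) ≤ 4`, which forces `k₁ ≤ 4`; and `d ≤ k₁²` then
forces `k₂ ≤ 6`. The remaining finitely many pairs are checked directly.
-/

section CommRing

variable {R : Type*} [CommRing R] {a b : R}

theorem mul_sub_sub_dvd_add (h : a * b - a - b ∣ a * b) : a * b - a - b ∣ a + b := by
  rw [show a + b = a * b - (a * b - a - b) by ring]
  exact dvd_sub h dvd_rfl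

theorem mul_sub_sub_dvd_sq (h : a * b - a - b ∣ a * b) : a * b - a - b ∣ a ^ 2 := by
  rw [show a ^ 2 = a * (a + b) - a * b by ring]
  exact dvd_sub (dvd_mul_of_dvd_right (mul_sub_sub_dvd_add h) a) h

end CommRing

section Int

variable {a b : ℤ}

theorem mul_sub_sub_pos (ha : 2 ≤ a) (hab : a ≤ b) (h : a * b - a - b ∣ a * b) :
    0 < a * b - a - b := by
  have hnonneg : 0 ≤ a * b - a - b := by nlinarith
  refine hnonneg.lt_of_ne fun hzero => ?_
  rw [← hzero, zero_dvd_iff] at h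
  nlinarith

theorem le_four_and_le_six_of_mul_sub_sub_dvd (ha : 2 ≤ a) (hab : a ≤ b)
    (h : a * b - a - b ∣ a * b) : a ≤ 4 ∧ b ≤ 6 := by
  have hd := mul_sub_sub_pos ha hab h
  have hle_add : a * b - a - b ≤ a + b := Int.le_of_dvd (by omega) (mul_sub_sub_dvd_add h)
  have hle_sq : a * b - a - b ≤ a ^ 2 := Int.le_of_dvd (by positivity) (mul_sub_sub_dvd_sq h)
  have ha4 : a ≤ 4 := by nlinarith
  refine ⟨ha4, ?_⟩
  interval_cases a <;> omega

end Int

theorem stmt_14_general (k1 k2 : ℤ) (h1 : 1 ≤ k1) (h12 : k1 ≤ k2)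
    (hdvd : (k1 * k2 - k1 - k2) ∣ (k1 * k2)) :
    k1 = 1 ∨ (k1, k2) = (2, 3) ∨ (k1, k2) = (2, 4) ∨ (k1, k2) = (2, 6) ∨
    (k1, k2) = (3, 3) ∨ (k1, k2) = (3, 6) ∨ (k1, k2) = (4, 4) := by
  rcases h1.eq_or_lt with h | h2
  · exact Or.inl h.symm
  obtain ⟨hk1, hk2⟩ := le_four_and_le_six_of_mul_sub_sub_dvd h2 h12 hdvd
  simp only [Prod.mk.injEq]
  interval_cases k1 <;> interval_cases k2 <;> revert hdvd <;> decide

theorem stmt_14 (k1 k2 : ℤ) (h1 : 1 ≤ k1) (h12 : k1 ≤ k2)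
    (hne : k1 * k2 - k1 - k2 ≠ 0)
    (hdvd : (k1 * k2 - k1 - k2) ∣ (k1 * k2)) :
    k1 = 1 ∨ (k1, k2) = (2, 3) ∨ (k1, k2) = (2, 4) ∨ (k1, k2) = (2, 6) ∨
    (k1, k2) = (3, 3) ∨ (k1, k2) = (3, 6) ∨ (k1, k2) = (4, 4) :=
  stmt_14_general k1 k2 h1 h12 hdvd
end

section
/- If k1, k2 are nonzero integers with k1 > 0, k2 < 0, k1·k2 - k1 - k2 ≠ 0, and (k1·k2)/(k1·k2 - k1 - k2) is an integer, then k1 = 1 or k1 = -k2. -/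
/-!
Put `d = k₁k₂ - k₁ - k₂`. Since `k₁k₂ - d = k₁ + k₂`, the divisibility `d ∣ k₁k₂` gives `d ∣ k₁ + k₂`.
For `k₁ ≥ 2` and `k₂ < 0` one has `|k₁ + k₂| < |d|`, so `k₁ + k₂ = 0`.
-/

theorem mul_sub_sub_dvd_add_of_dvd_mul {R : Type*} [CommRing R] {a b : R} (h : a * b - a - b ∣ a * b) :
    a * b - a - b ∣ a + b := by
  have key := h.sub (dvd_refl (a * b - a - b))
  rwa [show a * b - (a * b - a - b) = a + b by ring] at key

theorem abs_add_lt_neg_mul_sub_sub {R : Type*} [CommRing R] [LinearOrder R] [IsStrictOrderedRing R]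
    {a b : R} (ha : 2 ≤ a) (hb : b < 0) : |a + b| < -(a * b - a - b) := by
  rw [abs_lt]
  constructor <;> nlinarith

theorem stmt_15_general (k1 k2 : ℤ) (h1 : 0 < k1) (h2 : k2 < 0)
    (hdvd : (k1 * k2 - k1 - k2) ∣ (k1 * k2)) :
    k1 = 1 ∨ k1 = -k2 := by
  rcases (show k1 = 1 ∨ 2 ≤ k1 by omega) with rfl | hk1
  · exact Or.inl rfl
  · right
    have hsum : k1 + k2 = 0 :=
      Int.eq_zero_of_abs_lt_dvd (neg_dvd.mpr (mul_sub_sub_dvd_add_of_dvd_mul hdvd))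
        (abs_add_lt_neg_mul_sub_sub hk1 h2)
    omega

theorem stmt_15 (k1 k2 : ℤ) (h1 : 0 < k1) (h2 : k2 < 0)
    (hne : k1 * k2 - k1 - k2 ≠ 0)
    (hdvd : (k1 * k2 - k1 - k2) ∣ (k1 * k2)) :
    k1 = 1 ∨ k1 = -k2 :=
  stmt_15_general k1 k2 h1 h2 hdvd
end

section
/- Let a, c, k be real constants with a ≠ 0, c ≠ 0, k ≠ 0, and let C1, C2 be real constants. Define D(t) = C1·exp(a·k·t) + a·exp(-c·k·t) - C2, and on any interval where D(t) ≠ 0, define x1(t) = k·C1·exp(a·k·t)/D(t), x3(t) = k·a·exp(-c·k·t)/D(t), x2(t) = -k·C2/D(t). Then (x1,x2,x3) solves the Lotka-Volterra system x1' = a·k·x1 - a·x1² + c·x1·x3, x3' = -c·k·x3 + c·x3² - a·x1·x3, x2 = k - x1 - x3. -/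
/-!
Write `x₁ = u₁ / D` and `x₃ = u₃ / D` with `u₁ = k C₁ e^{akt}` and `u₃ = k a e^{-ckt}`.
Since `uᵢ' = rᵢ uᵢ`, the logarithmic derivative of `xᵢ` is `rᵢ - D'/D`; and `D' = a u₁ - c u₃`,
i.e. `D'/D = a x₁ - c x₃`, which turns `xᵢ' = xᵢ (rᵢ - D'/D)` into the two Lotka–Volterra
equations. The relation `x₁ + x₂ + x₃ = k` is `u₁ + u₃ - k C₂ = k D`.
-/

open Real

lemma hasDerivAt_const_mul_exp_mul (m r t : ℝ) :
    HasDerivAt (fun s => m * exp (r * s)) (r * (m * exp (r * t))) t := by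
  have h := ((hasDerivAt_id t).const_mul r).exp.const_mul m
  simp only [id, mul_one] at h
  exact h.congr_deriv (by ring)

lemma HasDerivAt.div_of_hasDerivAt_eq_mul {u D : ℝ → ℝ} {r D' t : ℝ}
    (hu : HasDerivAt u (r * u t) t) (hD : HasDerivAt D D' t) (hDt : D t ≠ 0) :
    HasDerivAt (fun s => u s / D s) (u t / D t * (r - D' / D t)) t :=
  (hu.div hD hDt).congr_deriv (by field_simp)

theorem stmt_17_general (a c k C1 C2 : ℝ) :
    let D : ℝ → ℝ := fun t => C1 * Real.exp (a * k * t) + a * Real.exp (-c * k * t) - C2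
    let x1 : ℝ → ℝ := fun t => k * C1 * Real.exp (a * k * t) / D t
    let x3 : ℝ → ℝ := fun t => k * a * Real.exp (-c * k * t) / D t
    let x2 : ℝ → ℝ := fun t => -k * C2 / D t
    ∀ t : ℝ, D t ≠ 0 →
      HasDerivAt x1 (a * k * x1 t - a * (x1 t) ^ 2 + c * x1 t * x3 t) t ∧
      HasDerivAt x3 (-c * k * x3 t + c * (x3 t) ^ 2 - a * x1 t * x3 t) t ∧
      x2 t = k - x1 t - x3 t := by
  intro D x1 x3 x2 t hDt
  have hu1 := hasDerivAt_const_mul_exp_mul (k * C1) (a * k) t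
  have hu3 := hasDerivAt_const_mul_exp_mul (k * a) (-c * k) t
  have hD : HasDerivAt D (a * (k * C1 * exp (a * k * t)) - c * (k * a * exp (-c * k * t))) t :=
    (((hasDerivAt_const_mul_exp_mul C1 (a * k) t).add
      (hasDerivAt_const_mul_exp_mul a (-c * k) t)).sub_const C2).congr_deriv (by ring)
  have hlogD : (a * (k * C1 * exp (a * k * t)) - c * (k * a * exp (-c * k * t))) / D t =
      a * x1 t - c * x3 t := by
    rw [sub_div, mul_div_assoc a, mul_div_assoc c]
  refine ⟨?_, ?_, ?_⟩
  · refine (hu1.div_of_hasDerivAt_eq_mul hD hDt).congr_deriv ?_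
    rw [hlogD]
    ring
  · refine (hu3.div_of_hasDerivAt_eq_mul hD hDt).congr_deriv ?_
    rw [hlogD]
    ring
  · show -k * C2 / D t = k - k * C1 * exp (a * k * t) / D t - k * a * exp (-c * k * t) / D t
    rw [eq_sub_iff_add_eq, eq_sub_iff_add_eq, ← add_div, ← add_div, div_eq_iff hDt]
    ring

theorem stmt_17 (a c k C1 C2 : ℝ) (ha : a ≠ 0) (hc : c ≠ 0) (hk : k ≠ 0) :
    let D : ℝ → ℝ := fun t => C1 * Real.exp (a * k * t) + a * Real.exp (-c * k * t) - C2
    let x1 : ℝ → ℝ := fun t => k * C1 * Real.exp (a * k * t) / D t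
    let x3 : ℝ → ℝ := fun t => k * a * Real.exp (-c * k * t) / D t
    let x2 : ℝ → ℝ := fun t => -k * C2 / D t
    ∀ t : ℝ, D t ≠ 0 →
      HasDerivAt x1 (a * k * x1 t - a * (x1 t) ^ 2 + c * x1 t * x3 t) t ∧
      HasDerivAt x3 (-c * k * x3 t + c * (x3 t) ^ 2 - a * x1 t * x3 t) t ∧
      x2 t = k - x1 t - x3 t :=
  stmt_17_general a c k C1 C2
end
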